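/- For a finite connected simple graph G, dmg(G) = 0 if and only if G contains a universal vertex. -/

import Mathlib

open SimpleGraph

/-!
Formalization of the game of Cops and Robber (one cop, one robber) and the damage number.

Round 0: the cop chooses a starting vertex, then the robber chooses a starting vertex.
In each subsequent round the cop moves to an adjacent vertex or passes, after which the
robber moves to an adjacent vertex or passes.  Strategies are modelled as functions of
the full history of positions (most recent first).
-/

/-- A cop strategy: an initial vertex together with a move function taking the history of
cop positions (most recent first, nonempty) and of robber positions (most recent first)
to the cop's next position. -/
structure CopStrategy (V : Type*) where
  init : V
  move : List V → List V → V

/-- A robber strategy: an initial vertex chosen in response to the cop's initial vertex,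
together with a move function taking the history of cop positions (most recent first,
including the cop's move from the current round) and of robber positions (most recent
first) to the robber's next position. -/
structure RobberStrategy (V : Type*) where
  init : V → V
  move : List V → List V → V

variable {V : Type*}

/-- A cop move function is legal for `G` if from any position it either passes or
moves along an edge of `G`. -/
def LegalCopMove (G : SimpleGraph V) (cs : List V → List V → V) : Prop :=
  ∀ (c : V) (ch rh : List V), cs (c :: ch) rh = c ∨ G.Adj c (cs (c :: ch) rh)

/-- A robber move function is legal for `G` if from any position it either passes or
moves along an edge of `G`. -/
def LegalRobMove (G : SimpleGraph V) (rs : List V → List V → V) : Prop :=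
  ∀ (r : V) (ch rh : List V), rs ch (r :: rh) = r ∨ G.Adj r (rs ch (r :: rh))

/-- A legal cop strategy: every move passes or goes along an edge. -/
def CopStrategy.Legal (G : SimpleGraph V) (CS : CopStrategy V) : Prop :=
  LegalCopMove G CS.move

/-- A legal robber strategy: every move passes or goes along an edge. -/
def RobberStrategy.Legal (G : SimpleGraph V) (RS : RobberStrategy V) : Prop :=
  LegalRobMove G RS.move

/-- `play CS RS n = (cₙ, rₙ, earlier cop positions, earlier robber positions)`:
the state of the game after round `n`, when the cop plays `CS` and the robber plays `RS`.
In each round the cop moves first, then the robber moves. -/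
def play (CS : CopStrategy V) (RS : RobberStrategy V) : ℕ → V × V × List V × List V
  | 0 => (CS.init, RS.init CS.init, [], [])
  | n + 1 =>
    let p := play CS RS n
    let c := CS.move (p.1 :: p.2.2.1) (p.2.1 :: p.2.2.2)
    let r := RS.move (c :: p.1 :: p.2.2.1) (p.2.1 :: p.2.2.2)
    (c, r, p.1 :: p.2.2.1, p.2.1 :: p.2.2.2)

/-- The cop's position after its move in round `n`. -/
def copPos (CS : CopStrategy V) (RS : RobberStrategy V) (n : ℕ) : V := (play CS RS n).1

/-- The robber's position after its move in round `n`. -/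
def robPos (CS : CopStrategy V) (RS : RobberStrategy V) (n : ℕ) : V := (play CS RS n).2.1

/-- The robber damages `v`: at the end of some round `n` the robber occupies `v`, having
never been captured up to that point (neither by moving onto the cop, nor by the cop's
move in any round up to and including round `n + 1`); it then passes or moves in
round `n + 1`, damaging `v`. -/
def Damages (CS : CopStrategy V) (RS : RobberStrategy V) (v : V) : Prop :=
  ∃ n, robPos CS RS n = v ∧
    ∀ k ≤ n, copPos CS RS k ≠ robPos CS RS k ∧ copPos CS RS (k + 1) ≠ robPos CS RS k

/-- The set of vertices damaged by the robber during the play of `CS` against `RS`. -/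
def damageSet (CS : CopStrategy V) (RS : RobberStrategy V) : Set V :=
  {v | Damages CS RS v}

/-- The damage number of `G`: the minimum over legal cop strategies of the maximum over
legal robber strategies of the number of distinct damaged vertices. -/
noncomputable def dmg (G : SimpleGraph V) : ℕ :=
  sInf { n | ∃ CS : CopStrategy V, CS.Legal G ∧
    ∀ RS : RobberStrategy V, RS.Legal G → (damageSet CS RS).ncard ≤ n }

/-- A cop strategy passes during the first round. -/
def CopStrategy.PassesFirst (CS : CopStrategy V) : Prop :=
  ∀ r : V, CS.move [CS.init] [r] = CS.init

/-- The damage number of `G` when the cop is required to pass during the first round. -/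
noncomputable def dmg' (G : SimpleGraph V) : ℕ :=
  sInf { n | ∃ CS : CopStrategy V, CS.Legal G ∧ CS.PassesFirst ∧
    ∀ RS : RobberStrategy V, RS.Legal G → (damageSet CS RS).ncard ≤ n }

/-- The eccentricity of a vertex: the maximum distance from `u` to any vertex. -/
noncomputable def ecc (G : SimpleGraph V) (u : V) : ℕ := sSup (Set.range (G.dist u))

/-- The radius of a graph: the minimum eccentricity over all vertices. -/
noncomputable def gRadius (G : SimpleGraph V) : ℕ := sInf (Set.range (ecc G))

/-!
Only the first two rounds matter. If the cop has not caught the robber by the end of round 1, the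
robber's starting vertex is damaged; once the robber is caught, nothing is damaged. So `dmg G = 0`
says that from some start `v` the cop catches the robber at once wherever it starts, i.e. every
other vertex is adjacent to `v`: a cop at `v` steps onto an adjacent robber, while against a cop
at a non-universal vertex the robber starts at distance at least two and never moves.
-/

def CopStrategy.stay (v : V) : CopStrategy V := ⟨v, fun ch _ => ch.headD v⟩

theorem CopStrategy.stay_legal (G : SimpleGraph V) (v : V) : (stay v).Legal G :=
  fun _ _ _ => Or.inl rfl

def CopStrategy.pounce (G : SimpleGraph V) [DecidableRel G.Adj] (v : V) : CopStrategy V :=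
  ⟨v, fun ch rh => if G.Adj (ch.headD v) (rh.headD v) then rh.headD v else ch.headD v⟩

theorem CopStrategy.pounce_legal (G : SimpleGraph V) [DecidableRel G.Adj] (v : V) :
    (pounce G v).Legal G := by
  intro c ch rh
  dsimp only [pounce]
  split
  case isTrue h => exact Or.inr h
  case isFalse => exact Or.inl rfl

def RobberStrategy.stay (w : V) : RobberStrategy V := ⟨fun _ => w, fun _ rh => rh.headD w⟩

theorem RobberStrategy.stay_legal (G : SimpleGraph V) (w : V) : (stay w).Legal G :=
  fun _ _ _ => Or.inl rfl

section FirstRounds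

variable (CS : CopStrategy V) (RS : RobberStrategy V)

@[simp] theorem copPos_zero : copPos CS RS 0 = CS.init := rfl

@[simp] theorem robPos_zero : robPos CS RS 0 = RS.init CS.init := rfl

@[simp] theorem copPos_one : copPos CS RS 1 = CS.move [CS.init] [RS.init CS.init] := rfl

theorem damageSet_eq_empty_iff :
    damageSet CS RS = ∅ ↔
      copPos CS RS 0 = robPos CS RS 0 ∨ copPos CS RS 1 = robPos CS RS 0 := by
  constructor
  · intro h
    by_contra! hfree
    have hdamaged : Damages CS RS (robPos CS RS 0) :=
      ⟨0, rfl, fun k hk => by rw [Nat.le_zero.mp hk]; exact hfree⟩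
    exact (Set.eq_empty_iff_forall_notMem.mp h) _ hdamaged
  · intro hcaught
    refine Set.eq_empty_iff_forall_notMem.mpr fun _ ⟨n, _, hfree⟩ => ?_
    have := hfree 0 n.zero_le
    tauto

end FirstRounds

theorem CopStrategy.Legal.eq_or_adj_of_damageSet_stay_eq_empty {G : SimpleGraph V}
    {CS : CopStrategy V} (hCS : CS.Legal G) {w : V}
    (hcaught : damageSet CS (.stay w) = ∅) : w = CS.init ∨ G.Adj CS.init w := by
  rw [damageSet_eq_empty_iff] at hcaught
  simp only [copPos_zero, robPos_zero, copPos_one, RobberStrategy.stay] at hcaught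
  rcases hcaught with hinit | hmove
  · exact Or.inl hinit.symm
  · exact hmove ▸ hCS CS.init [] [w]

theorem damageSet_pounce_eq_empty {G : SimpleGraph V} [DecidableRel G.Adj] {v : V}
    (hv : ∀ w, w ≠ v → G.Adj v w) (RS : RobberStrategy V) :
    damageSet (.pounce G v) RS = ∅ := by
  rw [damageSet_eq_empty_iff]
  by_cases hr : RS.init v = v
  · exact Or.inl hr.symm
  · exact Or.inr (by simp [CopStrategy.pounce, hv _ hr])

theorem dmg_eq_zero_iff_exists_legal_damageSet_eq_empty [Finite V] [Nonempty V]
    (G : SimpleGraph V) :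
    dmg G = 0 ↔ ∃ CS : CopStrategy V, CS.Legal G ∧
      ∀ RS : RobberStrategy V, RS.Legal G → damageSet CS RS = ∅ := by
  have hbounded : Nat.card V ∈ { n | ∃ CS : CopStrategy V, CS.Legal G ∧
      ∀ RS : RobberStrategy V, RS.Legal G → (damageSet CS RS).ncard ≤ n } :=
    ⟨.stay (Classical.arbitrary V), CopStrategy.stay_legal G _,
      fun _ _ => Set.ncard_le_card _⟩
  rw [dmg, Nat.sInf_eq_zero, or_iff_left (Set.nonempty_iff_ne_empty.mp ⟨_, hbounded⟩)]
  simp only [Set.mem_ofPred_eq, Nat.le_zero, Set.ncard_eq_zero (Set.toFinite _)]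

/-- For a finite connected graph `G`, `dmg(G) = 0` if and only if `G` has a universal
vertex. -/
theorem dmg_eq_zero_iff {V : Type*} [Fintype V] (G : SimpleGraph V)
    (hG : G.Connected) :
    dmg G = 0 ↔ ∃ v : V, ∀ w : V, w ≠ v → G.Adj v w := by
  classical
  have := hG.nonempty
  rw [dmg_eq_zero_iff_exists_legal_damageSet_eq_empty]
  constructor
  · rintro ⟨CS, hCS, hcatch⟩
    exact ⟨CS.init, fun w hw => (hCS.eq_or_adj_of_damageSet_stay_eq_empty
      (hcatch _ (RobberStrategy.stay_legal G w))).resolve_left hw⟩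
  · rintro ⟨v, hv⟩
    exact ⟨.pounce G v, CopStrategy.pounce_legal G v,
      fun RS _ => damageSet_pounce_eq_empty hv RS⟩
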